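/- For c ∈ ℝ let P'(c) = {y ∈ ℝ⁴ : −y₁−y₂−2y₄ ≤ 1/2, y₁−2y₄ ≤ 1/2, y₂−2y₄ ≤ 1/2, −y₃+3y₄ ≤ c, y₃+3y₄ ≤ c, 6y₄ ≤ 1/2, −6y₄ ≤ 1/2}. Then for every c ∈ (1/4, 3/4): P'(c) is a compact convex set with nonempty interior, its Lebesgue volume is ∫_{P'(c)} dy = (56c − 3)/144, the fourth moment is ∫_{P'(c)} y₄ dy = (5c − 2)/720, and ∫_{P'(c)} y_j dy = 0 for j = 1, 2, 3. -/

import Mathlib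

/-!
In the coordinates `t = y₃`, `z = y₂`, `(x, y) = (y₀, y₁)` the polytope fibres over
`t ∈ [-1/12, 1/12]`: the slice at height `t` is the segment `|z| ≤ c - 3t` (nonempty because
`c > 1/4`) times the triangle `x ≤ s, y ≤ s, x + y ≥ -s` with `s = 2t + 1/2`. That triangle has
area `9s²/2` and centroid `0`, and the segment is symmetric about `0`, so by Fubini the moments in
`x, y, z` vanish while the volume and the `t`-moment are the integrals of
`9 (c - 3t)(2t + 1/2)²` and `t · 9 (c - 3t)(2t + 1/2)²` over `[-1/12, 1/12]`.
-/

open MeasureTheory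

/-- The polytope `P'(c) ⊆ ℝ⁴` of the divisor `D(c)` after the linear change of
coordinates used in the paper. -/
def Pprime (c : ℝ) : Set (EuclideanSpace ℝ (Fin 4)) :=
  {y | -y 0 - y 1 - 2 * y 3 ≤ 1/2 ∧ y 0 - 2 * y 3 ≤ 1/2 ∧ y 1 - 2 * y 3 ≤ 1/2 ∧
       -y 2 + 3 * y 3 ≤ c ∧ y 2 + 3 * y 3 ≤ c ∧
       6 * y 3 ≤ 1/2 ∧ -(6 * y 3) ≤ 1/2}

open Set

theorem setIntegral_eq_integral_setIntegral_of_slices {α β E : Type*} [MeasureSpace α]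
    [MeasureSpace β] [SFinite (volume : Measure α)] [SFinite (volume : Measure β)]
    [NormedAddCommGroup E] [NormedSpace ℝ E] {A : Set α} {V : α → Set β}
    (hA : MeasurableSet A) (hU : MeasurableSet {p : α × β | p.1 ∈ A ∧ p.2 ∈ V p.1})
    {G : α × β → E} (hG : IntegrableOn G {p : α × β | p.1 ∈ A ∧ p.2 ∈ V p.1}) :
    ∫ p in {p : α × β | p.1 ∈ A ∧ p.2 ∈ V p.1}, G p = ∫ a in A, ∫ b in V a, G (a, b) := by
  set U := {p : α × β | p.1 ∈ A ∧ p.2 ∈ V p.1}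
  have hG' : Integrable (U.indicator G) (volume.prod volume) := by
    rwa [← Measure.volume_eq_prod, integrable_indicator_iff hU]
  rw [← integral_indicator hU, Measure.volume_eq_prod, integral_prod _ hG',
    ← integral_indicator hA]
  congr 1
  funext a
  by_cases ha : a ∈ A
  · have hslice : Prod.mk a ⁻¹' U = V a := by
      ext b
      simp [U, ha]
    rw [indicator_of_mem ha, ← integral_indicator (hslice ▸ measurable_prodMk_left hU)]
    congr 1
    funext b
    rw [← hslice]
    rfl
  · simp [indicator, U, ha]

theorem setIntegral_Icc_eq_intervalIntegral {E : Type*} [NormedAddCommGroup E] [NormedSpace ℝ E]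
    {a b : ℝ} (hab : a ≤ b) (f : ℝ → E) :
    ∫ x in Icc a b, f x = ∫ x in a..b, f x := by
  rw [integral_Icc_eq_integral_Ioc, intervalIntegral.integral_of_le hab]

theorem intervalIntegral_eq_of_quartic {f : ℝ → ℝ} {p q r s u : ℝ}
    (hf : ∀ x, f x = p + q * x + r * x ^ 2 + s * x ^ 3 + u * x ^ 4) (a b : ℝ) :
    ∫ x in a..b, f x
      = p * (b - a) + q * (b ^ 2 - a ^ 2) / 2 + r * (b ^ 3 - a ^ 3) / 3
        + s * (b ^ 4 - a ^ 4) / 4 + u * (b ^ 5 - a ^ 5) / 5 := by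
  have hderiv : ∀ x ∈ uIcc a b,
      HasDerivAt (fun x => p * x + q * x ^ 2 / 2 + r * x ^ 3 / 3 + s * x ^ 4 / 4 + u * x ^ 5 / 5)
        (f x) x := by
    intro x _
    have hpow (n : ℕ) := hasDerivAt_pow n x
    exact (((((hasDerivAt_id x).const_mul p).add (((hpow 2).const_mul q).div_const 2)).add
      (((hpow 3).const_mul r).div_const 3)).add (((hpow 4).const_mul s).div_const 4)).add
      (((hpow 5).const_mul u).div_const 5) |>.congr_deriv (by rw [hf]; norm_num; ring)
  rw [funext hf] at hderiv ⊢
  rw [intervalIntegral.integral_eq_sub_of_hasDerivAt hderiv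
    (Continuous.intervalIntegrable (by fun_prop) a b)]
  ring

/-- The triangle `x ≤ s, y ≤ s, -s ≤ x + y` (vertices `(s, s)`, `(s, -2s)`, `(-2s, s)`),
written as a union of vertical segments. -/
def triangle (s : ℝ) : Set (ℝ × ℝ) :=
  {v | v.1 ∈ Icc (-2 * s) s ∧ v.2 ∈ Icc (-s - v.1) s}

theorem triangle_subset_Icc (s : ℝ) : triangle s ⊆ Icc (-2 * s) s ×ˢ Icc (-2 * s) s := by
  rintro ⟨x, y⟩ ⟨⟨hx₁, hx₂⟩, hy₁, hy₂⟩
  exact ⟨⟨hx₁, hx₂⟩, by linarith, hy₂⟩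

theorem measurableSet_triangle (s : ℝ) : MeasurableSet (triangle s) := by
  unfold triangle
  simp only [mem_Icc]
  measurability

theorem setIntegral_triangle {s : ℝ} (hs : 0 ≤ s) {f : ℝ × ℝ → ℝ} (hf : Continuous f) :
    ∫ v in triangle s, f v = ∫ x in (-2 * s)..s, ∫ y in (-s - x)..s, f (x, y) := by
  have hint : IntegrableOn f (triangle s) :=
    (hf.continuousOn.integrableOn_compact (isCompact_Icc.prod isCompact_Icc)).mono_set
      (triangle_subset_Icc s)
  rw [triangle, setIntegral_eq_integral_setIntegral_of_slices (V := fun x => Icc (-s - x) s)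
    measurableSet_Icc (measurableSet_triangle s) hint,
    setIntegral_Icc_eq_intervalIntegral (by linarith)]
  refine intervalIntegral.integral_congr fun x hx => ?_
  rw [uIcc_of_le (by linarith)] at hx
  exact setIntegral_Icc_eq_intervalIntegral (by linarith [hx.1]) _

theorem volume_real_triangle {s : ℝ} (hs : 0 ≤ s) :
    volume.real (triangle s) = 9 * s ^ 2 / 2 := by
  have h := setIntegral_triangle hs (f := fun _ => (1 : ℝ)) continuous_const
  rw [setIntegral_const, smul_eq_mul, mul_one] at h
  simp only [h, intervalIntegral.integral_const, smul_eq_mul, mul_one]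
  rw [intervalIntegral_eq_of_quartic (p := 2 * s) (q := 1) (r := 0) (s := 0) (u := 0)
    fun x => by ring]
  ring

theorem setIntegral_triangle_fst {s : ℝ} (hs : 0 ≤ s) : ∫ v in triangle s, v.1 = 0 := by
  rw [setIntegral_triangle hs continuous_fst]
  simp only [intervalIntegral.integral_const, smul_eq_mul]
  rw [intervalIntegral_eq_of_quartic (p := 0) (q := 2 * s) (r := 1) (s := 0) (u := 0)
    fun x => by ring]
  ring

theorem setIntegral_triangle_snd {s : ℝ} (hs : 0 ≤ s) : ∫ v in triangle s, v.2 = 0 := by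
  rw [setIntegral_triangle hs continuous_snd]
  simp only [integral_id]
  rw [intervalIntegral_eq_of_quartic (p := 0) (q := -s) (r := -1/2) (s := 0) (u := 0)
    fun x => by ring]
  ring

theorem isClosed_Pprime (c : ℝ) : IsClosed (Pprime c) := by
  simp only [Pprime, ofPred_and]
  repeat' apply IsClosed.inter
  all_goals exact isClosed_le (by fun_prop) (by fun_prop)

theorem isBounded_Pprime (c : ℝ) : Bornology.IsBounded (Pprime c) := by
  refine ((PiLp.antilipschitzWith_ofLp 2 _).isBounded_preimage
    (Metric.isBounded_Icc (fun _ : Fin 4 => -(|c| + 2)) fun _ => |c| + 2)).subset ?_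
  rintro y ⟨h₁, h₂, h₃, h₄, h₅, h₆, h₇⟩
  have := le_abs_self c
  have := neg_abs_le c
  constructor <;> intro i <;> fin_cases i <;> simp <;> linarith

theorem convex_Pprime (c : ℝ) : Convex ℝ (Pprime c) := by
  rintro u ⟨hu₁, hu₂, hu₃, hu₄, hu₅, hu₆, hu₇⟩ v ⟨hv₁, hv₂, hv₃, hv₄, hv₅, hv₆, hv₇⟩
    a b ha hb hab
  simp only [Pprime, mem_ofPred_eq, PiLp.add_apply, PiLp.smul_apply, smul_eq_mul]
  refine ⟨?_, ?_, ?_, ?_, ?_, ?_, ?_⟩ <;> nlinarith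

theorem ball_subset_Pprime {c : ℝ} (hc : 1/4 < c) : Metric.ball 0 (1/16) ⊆ Pprime c := by
  intro y hy
  have hcoord (i : Fin 4) : |y i| < 1/16 :=
    (PiLp.norm_apply_le y i).trans_lt (mem_ball_zero_iff.1 hy)
  obtain ⟨h₀, h₀'⟩ := abs_lt.1 (hcoord 0)
  obtain ⟨h₁, h₁'⟩ := abs_lt.1 (hcoord 1)
  obtain ⟨h₂, h₂'⟩ := abs_lt.1 (hcoord 2)
  obtain ⟨h₃, h₃'⟩ := abs_lt.1 (hcoord 3)
  refine ⟨?_, ?_, ?_, ?_, ?_, ?_, ?_⟩ <;> linarith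

noncomputable def coordEquiv : EuclideanSpace ℝ (Fin 4) ≃ᵐ ℝ × ℝ × ℝ × ℝ :=
  (MeasurableEquiv.toLp 2 (Fin 4 → ℝ)).symm.trans <|
    (MeasurableEquiv.piFinSuccAbove (fun _ => ℝ) 3).trans <|
      (MeasurableEquiv.refl ℝ).prodCongr <|
        (MeasurableEquiv.piFinSuccAbove (fun _ => ℝ) 2).trans <|
          (MeasurableEquiv.refl ℝ).prodCongr MeasurableEquiv.finTwoArrow

theorem coordEquiv_apply (y : EuclideanSpace ℝ (Fin 4)) :
    coordEquiv y = (y 3, y 2, y 0, y 1) :=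
  rfl

theorem measurePreserving_coordEquiv : MeasurePreserving coordEquiv :=
  ((MeasurePreserving.id volume).prod ((MeasurePreserving.id volume).prod
    (volume_preserving_finTwoArrow ℝ) |>.comp (volume_preserving_piFinSuccAbove _ 2))).comp
    ((volume_preserving_piFinSuccAbove _ 3).comp
      (EuclideanSpace.volume_preserving_symm_measurableEquiv_toLp _))

/-- `Pprime c` in the coordinates `(t, z, x, y) = (y₃, y₂, y₀, y₁)` of `coordEquiv`. -/
def slicedPprime (c : ℝ) : Set (ℝ × ℝ × ℝ × ℝ) :=
  {p | p.1 ∈ Icc (-(1/12)) (1/12) ∧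
    p.2 ∈ Icc (3 * p.1 - c) (c - 3 * p.1) ×ˢ triangle (2 * p.1 + 1/2)}

theorem coordEquiv_preimage_slicedPprime (c : ℝ) :
    coordEquiv ⁻¹' slicedPprime c = Pprime c := by
  ext y
  simp only [mem_preimage, coordEquiv_apply, slicedPprime, triangle, Pprime, mem_ofPred_eq,
    mem_prod, mem_Icc]
  constructor
  · rintro ⟨⟨h₁, h₂⟩, ⟨h₃, h₄⟩, ⟨h₅, h₆⟩, h₇, h₈⟩
    refine ⟨?_, ?_, ?_, ?_, ?_, ?_, ?_⟩ <;> linarith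
  · rintro ⟨h₁, h₂, h₃, h₄, h₅, h₆, h₇⟩
    refine ⟨⟨?_, ?_⟩, ⟨?_, ?_⟩, ⟨?_, ?_⟩, ?_, ?_⟩ <;> linarith

theorem setIntegral_Pprime (c : ℝ) (F : ℝ × ℝ × ℝ × ℝ → ℝ) :
    ∫ y in Pprime c, F (coordEquiv y) = ∫ p in slicedPprime c, F p := by
  rw [← coordEquiv_preimage_slicedPprime]
  exact measurePreserving_coordEquiv.setIntegral_preimage_emb coordEquiv.measurableEmbedding _ _

theorem slicedPprime_subset_Icc (c : ℝ) :
    slicedPprime c ⊆ Icc (-1) 1 ×ˢ Icc (-(|c| + 1)) (|c| + 1) ×ˢ Icc (-2) 2 ×ˢ Icc (-2) 2 := by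
  rintro ⟨t, z, x, y⟩ ⟨⟨h₁, h₂⟩, ⟨h₃, h₄⟩, ⟨h₅, h₆⟩, h₇, h₈⟩
  have := le_abs_self c
  have := neg_abs_le c
  refine ⟨⟨?_, ?_⟩, ⟨?_, ?_⟩, ⟨?_, ?_⟩, ?_, ?_⟩ <;> linarith

theorem setIntegral_slicedPprime {c : ℝ} (hc : 1/4 ≤ c) {F : ℝ × ℝ × ℝ × ℝ → ℝ}
    (hF : Continuous F) :
    ∫ p in slicedPprime c, F p = ∫ t in (-(1/12))..(1/12), ∫ z in (3 * t - c)..(c - 3 * t),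
      ∫ v in triangle (2 * t + 1/2), F (t, z, v) := by
  have hmeas : MeasurableSet (slicedPprime c) := by
    rw [← coordEquiv.measurableSet_preimage, coordEquiv_preimage_slicedPprime]
    exact (isClosed_Pprime c).measurableSet
  have hint : IntegrableOn F (slicedPprime c) :=
    (hF.continuousOn.integrableOn_compact (isCompact_Icc.prod (isCompact_Icc.prod
      (isCompact_Icc.prod isCompact_Icc)))).mono_set (slicedPprime_subset_Icc c)
  rw [slicedPprime, setIntegral_eq_integral_setIntegral_of_slices
    (V := fun t => Icc (3 * t - c) (c - 3 * t) ×ˢ triangle (2 * t + 1/2))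
    measurableSet_Icc hmeas hint,
    setIntegral_Icc_eq_intervalIntegral (by norm_num)]
  refine intervalIntegral.integral_congr fun t ht => ?_
  rw [uIcc_of_le (by norm_num)] at ht
  have hslice : IntegrableOn (fun w => F (t, w))
      (Icc (3 * t - c) (c - 3 * t) ×ˢ triangle (2 * t + 1/2)) :=
    ((hF.comp (Continuous.prodMk_right t)).continuousOn.integrableOn_compact
      (isCompact_Icc.prod (isCompact_Icc.prod isCompact_Icc))).mono_set
      (prod_mono subset_rfl (triangle_subset_Icc _))
  rw [Measure.volume_eq_prod] at hslice ⊢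
  rw [setIntegral_prod _ hslice,
    setIntegral_Icc_eq_intervalIntegral (by linarith [ht.2])]

theorem setIntegral_slicedPprime_comp_fst {c : ℝ} (hc : 1/4 ≤ c) {g : ℝ → ℝ}
    (hg : Continuous g) :
    ∫ p in slicedPprime c, g p.1
      = ∫ t in (-(1/12))..(1/12), g t * (9 * (c - 3 * t) * (2 * t + 1/2) ^ 2) := by
  rw [setIntegral_slicedPprime hc (F := fun p => g p.1) (by fun_prop)]
  refine intervalIntegral.integral_congr fun t ht => ?_
  rw [uIcc_of_le (by norm_num)] at ht
  simp only [setIntegral_const, volume_real_triangle (by linarith [ht.1] : 0 ≤ 2 * t + 1/2),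
    intervalIntegral.integral_const, smul_eq_mul]
  ring

theorem setIntegral_slicedPprime_one {c : ℝ} (hc : 1/4 ≤ c) :
    ∫ _ in slicedPprime c, (1 : ℝ) = (56 * c - 3) / 144 := by
  rw [setIntegral_slicedPprime_comp_fst hc (g := fun _ => 1) continuous_const,
    intervalIntegral_eq_of_quartic (p := 9 * c / 4) (q := 18 * c - 27/4) (r := 36 * c - 54)
      (s := -108) (u := 0) fun t => by ring]
  ring

theorem setIntegral_slicedPprime_fst {c : ℝ} (hc : 1/4 ≤ c) :
    ∫ p in slicedPprime c, p.1 = (5 * c - 2) / 720 := by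
  rw [setIntegral_slicedPprime_comp_fst hc (g := fun t => t) continuous_id,
    intervalIntegral_eq_of_quartic (p := 0) (q := 9 * c / 4) (r := 18 * c - 27/4)
      (s := 36 * c - 54) (u := -108) fun t => by ring]
  ring

theorem setIntegral_slicedPprime_snd_fst {c : ℝ} (hc : 1/4 ≤ c) :
    ∫ p in slicedPprime c, p.2.1 = 0 := by
  rw [setIntegral_slicedPprime hc (by fun_prop)]
  refine (intervalIntegral.integral_congr (g := fun _ => 0) fun t _ => ?_).trans
    intervalIntegral.integral_zero
  simp only [setIntegral_const, smul_eq_mul]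
  rw [intervalIntegral.integral_const_mul, integral_id]
  ring

theorem setIntegral_slicedPprime_snd_snd_fst {c : ℝ} (hc : 1/4 ≤ c) :
    ∫ p in slicedPprime c, p.2.2.1 = 0 := by
  rw [setIntegral_slicedPprime hc (by fun_prop)]
  refine (intervalIntegral.integral_congr (g := fun _ => 0) fun t ht => ?_).trans
    intervalIntegral.integral_zero
  rw [uIcc_of_le (by norm_num)] at ht
  simp only [setIntegral_triangle_fst (by linarith [ht.1] : 0 ≤ 2 * t + 1/2),
    intervalIntegral.integral_zero]

theorem setIntegral_slicedPprime_snd_snd_snd {c : ℝ} (hc : 1/4 ≤ c) :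
    ∫ p in slicedPprime c, p.2.2.2 = 0 := by
  rw [setIntegral_slicedPprime hc (by fun_prop)]
  refine (intervalIntegral.integral_congr (g := fun _ => 0) fun t ht => ?_).trans
    intervalIntegral.integral_zero
  rw [uIcc_of_le (by norm_num)] at ht
  simp only [setIntegral_triangle_snd (by linarith [ht.1] : 0 ≤ 2 * t + 1/2),
    intervalIntegral.integral_zero]

/-- Explicit volume, moment and symmetry computations for `P'(c)` from the
proof of Corollary 1.3. -/
theorem stmt14 (c : ℝ) (hc : c ∈ Set.Ioo (1/4 : ℝ) (3/4)) :
    IsCompact (Pprime c) ∧ Convex ℝ (Pprime c) ∧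
      (interior (Pprime c)).Nonempty ∧
      (∫ y in Pprime c, (1 : ℝ)) = (56 * c - 3) / 144 ∧
      (∫ y in Pprime c, y 3) = (5 * c - 2) / 720 ∧
      (∫ y in Pprime c, y 0) = 0 ∧
      (∫ y in Pprime c, y 1) = 0 ∧
      (∫ y in Pprime c, y 2) = 0 := by
  have hc' : 1/4 ≤ c := hc.1.le
  refine ⟨Metric.isCompact_of_isClosed_isBounded (isClosed_Pprime c) (isBounded_Pprime c),
    convex_Pprime c,
    ⟨0, mem_interior_iff_mem_nhds.2 <|
      Filter.mem_of_superset (Metric.ball_mem_nhds 0 (by norm_num)) (ball_subset_Pprime hc.1)⟩,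
    (setIntegral_Pprime c fun _ => 1).trans (setIntegral_slicedPprime_one hc'),
    (setIntegral_Pprime c fun p => p.1).trans (setIntegral_slicedPprime_fst hc'),
    (setIntegral_Pprime c fun p => p.2.2.1).trans (setIntegral_slicedPprime_snd_snd_fst hc'),
    (setIntegral_Pprime c fun p => p.2.2.2).trans (setIntegral_slicedPprime_snd_snd_snd hc'),
    (setIntegral_Pprime c fun p => p.2.1).trans (setIntegral_slicedPprime_snd_fst hc')⟩
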